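/- Let γ be an automorphism of a finitely generated free ℤ-module H preserving a nondegenerate bilinear form, and suppose γ ≡ Id mod m for some integer m ≥ 3. If γ has finite order, then γ = Id. -/

import Mathlib

/-!
Pick a prime power `q ^ e ∣ m` with `q ^ e ≥ 3`. If `γ = 1 + q ^ r y` with `q ^ r ≥ 3` and
`γ ^ p = 1` for a prime `p`, the binomial expansion of `(1 + q ^ r y) ^ p - 1 = 0` forces `q ∣ y`:
for `p ≠ q` the linear term `p q ^ r y` is the only one not visibly divisible by `q ^ (r + 1)`,
and for `p = q` the linear term `q ^ (r + 1) y` is the only one not visibly divisible by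
`q ^ (r + 2)`; the last term `q ^ (q r) y ^ q` is where `q ^ r ≥ 3` is needed. Iterating, `γ - 1`
is divisible by every power of `q`, hence vanishes, because `End H` is torsion-free and
`q`-adically separated. A `γ` of arbitrary finite order has a power of prime order to which
this applies.
-/

open Finset

theorem Int.exists_prime_pow_dvd_of_three_le {m : ℤ} (hm : 3 ≤ m) :
    ∃ q e : ℕ, q.Prime ∧ 3 ≤ q ^ e ∧ (q : ℤ) ^ e ∣ m := by
  lift m to ℕ using by omega
  rcases Nat.eq_two_pow_or_exists_odd_prime_and_dvd m with ⟨e, rfl⟩ | ⟨q, hq, hqm, hodd⟩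
  · exact ⟨2, e, Nat.prime_two, by exact_mod_cast hm, by simp⟩
  · refine ⟨q, 1, hq, ?_, by simpa using Int.natCast_dvd_natCast.mpr hqm⟩
    have := hq.two_le
    rcases hodd with ⟨j, rfl⟩
    rw [pow_one]
    omega

theorem Nat.add_two_le_mul_of_three_le_pow {q r : ℕ} (hq : q.Prime) (hqr : 3 ≤ q ^ r) :
    r + 2 ≤ r * q := by
  rcases r with _ | _ | r
  · simp at hqr
  · have : q ≠ 2 := by rintro rfl; simp at hqr
    have := hq.two_le
    omega
  · nlinarith [hq.two_le]

theorem Nat.pow_add_two_dvd_choose_mul_pow {q r i : ℕ} (hq : q.Prime) (hqr : 3 ≤ q ^ r)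
    (hi : 2 ≤ i) (hiq : i ≤ q) : q ^ (r + 2) ∣ q.choose i * (q ^ r) ^ i := by
  rw [← pow_mul]
  rcases hiq.lt_or_eq with hiq | hiq
  · rw [pow_succ']
    refine mul_dvd_mul (hq.dvd_choose_self (by omega) hiq) (pow_dvd_pow q ?_)
    have : 0 < r := Nat.pos_of_ne_zero (by rintro rfl; simp at hqr)
    nlinarith
  · rw [hiq, Nat.choose_self, one_mul]
    exact pow_dvd_pow q (Nat.add_two_le_mul_of_three_le_pow hq hqr)

section Ring

variable {R : Type*} [Ring R]

theorem one_add_natCast_mul_pow {p : ℕ} (hp : p ≠ 0) (c : ℕ) (y : R) :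
    (1 + (c : R) * y) ^ p = 1 + ((p * c : ℕ) : R) * y +
      ∑ i ∈ Ico 2 (p + 1), ((p.choose i * c ^ i : ℕ) : R) * y ^ i := by
  rw [add_comm 1, (Commute.one_right _).add_pow,
    ← sum_range_add_sum_Ico _ (by omega : 2 ≤ p + 1)]
  congr 1
  · simp [sum_range_succ, ← Nat.cast_comm p, mul_assoc]
  · refine sum_congr rfl fun i _ => ?_
    rw [(Nat.cast_commute c y).mul_pow]
    push_cast
    simp only [one_pow, mul_one]
    rw [← Nat.cast_comm, mul_assoc]

theorem natCast_dvd_natCast_mul_of_one_add_mul_pow_eq_one {c d p : ℕ} {y : R}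
    (hd : ∀ i ∈ Ico 2 (p + 1), d ∣ p.choose i * c ^ i) (h : (1 + (c : R) * y) ^ p = 1) :
    (d : R) ∣ ((p * c : ℕ) : R) * y := by
  rcases eq_or_ne p 0 with rfl | hp
  · simp
  rw [one_add_natCast_mul_pow hp, add_assoc, add_eq_left, add_eq_zero_iff_eq_neg] at h
  rw [h, dvd_neg]
  exact dvd_sum fun i hi => (Nat.cast_dvd_cast (hd i hi)).mul_right _

theorem Nat.Coprime.natCast_dvd_of_dvd_natCast_mul {p q : ℕ} (hpq : p.Coprime q) {y : R}
    (h : (q : R) ∣ p * y) : (q : R) ∣ y := by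
  obtain ⟨u, v, huv⟩ := Nat.isCoprime_iff_coprime.mpr hpq
  obtain ⟨w, hw⟩ := h
  refine ⟨u * w + v * y, ?_⟩
  calc y = ((u * p + v * q : ℤ) : R) * y := by rw [huv, Int.cast_one, one_mul]
    _ = u * (p * y) + q * (v * y) := by
      push_cast
      rw [add_mul, mul_assoc, mul_assoc, ← mul_assoc (v : R), Int.cast_comm v, mul_assoc]
    _ = q * (u * w + v * y) := by rw [hw, ← mul_assoc, Int.cast_comm u, mul_assoc, mul_add]

variable [IsAddTorsionFree R]

theorem natCast_dvd_of_natCast_mul_dvd_natCast_mul {a b : ℕ} (ha : a ≠ 0) {x : R}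
    (h : ((a * b : ℕ) : R) ∣ a * x) : (b : R) ∣ x := by
  obtain ⟨w, hw⟩ := h
  refine ⟨w, nsmul_right_injective ha ?_⟩
  simp only [nsmul_eq_mul, hw, Nat.cast_mul, mul_assoc]

theorem natCast_dvd_of_one_add_pow_mul_pow_eq_one {p q r : ℕ} (hp : p.Prime) (hq : q.Prime)
    (hqr : 3 ≤ q ^ r) {y : R} (h : (1 + (q : R) ^ r * y) ^ p = 1) : (q : R) ∣ y := by
  rw [← Nat.cast_pow] at h
  by_cases hpq : p = q
  · subst hpq
    have hdvd := natCast_dvd_natCast_mul_of_one_add_mul_pow_eq_one (fun i hi => by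
      simp only [mem_Ico] at hi
      exact Nat.pow_add_two_dvd_choose_mul_pow hp hqr hi.1 (by omega)) h
    refine natCast_dvd_of_natCast_mul_dvd_natCast_mul (pow_ne_zero (r + 1) hp.ne_zero) ?_
    rw [← pow_succ]
    rwa [← pow_succ'] at hdvd
  · have hr : 0 < r := Nat.pos_of_ne_zero (by rintro rfl; simp at hqr)
    have hdvd := natCast_dvd_natCast_mul_of_one_add_mul_pow_eq_one (d := q ^ (r + 1))
      (fun i hi => by
        simp only [mem_Ico] at hi
        rw [← pow_mul]
        exact (pow_dvd_pow q (by nlinarith)).mul_left _) h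
    refine ((Nat.coprime_primes hp hq).mpr hpq).natCast_dvd_of_dvd_natCast_mul
      (natCast_dvd_of_natCast_mul_dvd_natCast_mul (pow_ne_zero r hq.ne_zero) ?_)
    rwa [← pow_succ, ← mul_assoc, ← Nat.cast_mul, mul_comm]

theorem pow_dvd_sub_one_of_pow_eq_one {p q e : ℕ} (hp : p.Prime) (hq : q.Prime)
    (hqe : 3 ≤ q ^ e) {γ : R} (hγ : (q : R) ^ e ∣ γ - 1) (hγp : γ ^ p = 1) (n : ℕ) :
    (q : R) ^ n ∣ γ - 1 := by
  suffices ∀ j, (q : R) ^ (e + j) ∣ γ - 1 from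
    (pow_dvd_pow _ (Nat.le_add_left n e)).trans (this n)
  intro j
  induction j with
  | zero => exact hγ
  | succ j ih =>
    obtain ⟨y, hy⟩ := ih
    rw [sub_eq_iff_eq_add'] at hy
    have hqej : 3 ≤ q ^ (e + j) := hqe.trans (Nat.pow_le_pow_right hq.pos (Nat.le_add_right e j))
    obtain ⟨z, rfl⟩ := natCast_dvd_of_one_add_pow_mul_pow_eq_one hp hq hqej (hy ▸ hγp)
    exact ⟨z, by rw [hy, add_sub_cancel_left, ← add_assoc, pow_succ, mul_assoc]⟩

theorem eq_one_of_pow_eq_one_of_pow_dvd_sub_one {q e k : ℕ} (hq : q.Prime) (hqe : 3 ≤ q ^ e)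
    (hsep : ∀ x : R, (∀ n, (q : R) ^ n ∣ x) → x = 0) {γ : R} (hγ : (q : R) ^ e ∣ γ - 1)
    (hk : 0 < k) (hγk : γ ^ k = 1) : γ = 1 := by
  by_contra hne
  have hord : orderOf γ ≠ 0 := (isOfFinOrder_iff_pow_eq_one.mpr ⟨k, hk, hγk⟩).orderOf_pos.ne'
  set p := (orderOf γ).minFac
  have hp : p.Prime := Nat.minFac_prime (orderOf_eq_one_iff.not.mpr hne)
  have hpow : orderOf (γ ^ (orderOf γ / p)) = p := orderOf_pow_orderOf_div hord (Nat.minFac_dvd _)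
  have hone : γ ^ (orderOf γ / p) = 1 := sub_eq_zero.mp <| hsep _ <|
    pow_dvd_sub_one_of_pow_eq_one hp hq hqe (hγ.trans (sub_one_dvd_pow_sub_one γ _))
      (orderOf_dvd_iff_pow_eq_one.mp hpow.dvd)
  rw [hone, orderOf_one] at hpow
  exact hp.one_lt.ne' hpow.symm

end Ring

instance Module.End.isAddTorsionFree {R M : Type*} [Semiring R] [AddCommMonoid M] [Module R M]
    [IsAddTorsionFree M] : IsAddTorsionFree (Module.End R M) :=
  ⟨fun _ hn _ _ h => LinearMap.ext fun v => nsmul_right_injective hn (LinearMap.congr_fun h v)⟩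

section Free

variable {H : Type*} [AddCommGroup H] [Module ℤ H] [Module.Free ℤ H]

theorem Module.Free.eq_zero_of_forall_pow_smul {a : ℤ} (ha : a.natAbs ≠ 1) {x : H}
    (hx : ∀ n : ℕ, ∃ y : H, x = a ^ n • y) : x = 0 := by
  let b := Module.Free.chooseBasis ℤ H
  refine b.repr.injective (Finsupp.ext fun i => ?_)
  by_contra hi
  rw [map_zero, Finsupp.zero_apply] at hi
  refine FiniteMultiplicity.not_iff_forall.mpr (fun n => ?_)
    (Int.finiteMultiplicity_iff.mpr ⟨ha, hi⟩)
  obtain ⟨y, rfl⟩ := hx n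
  exact ⟨b.repr y i, by simp⟩

theorem Module.End.eq_zero_of_forall_natCast_pow_dvd {q : ℕ} (hq : q ≠ 1) {f : Module.End ℤ H}
    (hf : ∀ n, (q : Module.End ℤ H) ^ n ∣ f) : f = 0 :=
  LinearMap.ext fun v => Module.Free.eq_zero_of_forall_pow_smul (a := q) (by simpa using hq)
    fun n => by
      obtain ⟨g, rfl⟩ := hf n
      exact ⟨g v, by
        rw [Module.End.mul_apply, ← Nat.cast_pow, Module.End.natCast_apply, ← Nat.cast_pow,
          natCast_zsmul]⟩

end Free

theorem serre_lemma_general {H : Type*} [AddCommGroup H] [Module ℤ H]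
    [Module.Free ℤ H]
    (γ : Module.End ℤ H)
    (m : ℤ) (hm : 3 ≤ m) (δ : Module.End ℤ H) (hcong : γ - 1 = m • δ)
    (k : ℕ) (hk : 0 < k) (hfin : γ ^ k = 1) :
    γ = 1 := by
  have := IsAddTorsionFree.of_isTorsionFree ℤ H
  obtain ⟨q, e, hq, hqe, ⟨m', rfl⟩⟩ := Int.exists_prime_pow_dvd_of_three_le hm
  refine eq_one_of_pow_eq_one_of_pow_dvd_sub_one hq hqe
    (fun _ => Module.End.eq_zero_of_forall_natCast_pow_dvd hq.ne_one) ⟨m' • δ, ?_⟩ hk hfin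
  rw [hcong, mul_smul]
  simp only [zsmul_eq_mul, Int.cast_pow, Int.cast_natCast]

/-- Serre's lemma: a finite-order automorphism `γ` of a finitely
generated free `ℤ`-module `H` preserving a nondegenerate bilinear form, with
`γ ≡ Id (mod m)` for some integer `m ≥ 3`, is the identity. -/
theorem serre_lemma {H : Type*} [AddCommGroup H] [Module ℤ H]
    [Module.Free ℤ H] [Module.Finite ℤ H]
    (B : H →ₗ[ℤ] H →ₗ[ℤ] ℤ)
    (hB : ∀ x : H, (∀ y : H, B x y = 0) → x = 0)
    (γ : Module.End ℤ H) (hγ : IsUnit γ)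
    (hQ : ∀ x y : H, B (γ x) (γ y) = B x y)
    (m : ℤ) (hm : 3 ≤ m) (δ : Module.End ℤ H) (hcong : γ - 1 = m • δ)
    (k : ℕ) (hk : 0 < k) (hfin : γ ^ k = 1) :
    γ = 1 :=
  serre_lemma_general γ m hm δ hcong k hk hfin
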